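/- arXiv:2605.20945 — 2 statements merged into one kernel-verified Lean document; each statement's English description precedes it below -/
import Mathlib

section
/- Let Γ be amenable and Δ be non-amenable, and suppose Γ × Δ acts on a tree T with no edge inversions, no globally fixed vertex, and amenable edge stabilizers. If the restricted action of the subgroup {1} × Δ has a globally fixed vertex, then its fixed-point set is a single vertex v, and v is fixed by all of Γ × Δ, a contradiction. Hence the action of Δ on T has no globally fixed vertex, no edge inversions, and amenable edge stabilizers; i.e. Δ splits over an amenable subgroup whenever Γ × Δ does. -/
/-!
If `{1} × Δ` fixed a vertex `v`, it could fix no second vertex: the fixed set of a group acting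
on a tree is a subtree, so it would then contain an edge, and `Δ` would embed into the amenable
stabilizer of that edge. Since `Γ × 1` commutes with `{1} × Δ`, it permutes the fixed set `{v}`,
so `v` is fixed by all of `Γ × Δ`. Inversions and edge stabilizers of the restricted action are
those of the full action, intersected with `{1} × Δ`.
-/

open SimpleGraph

/-- A group is amenable if it carries a left-invariant finitely additive
probability measure defined on all subsets. -/
def IsAmenable (G : Type*) [Group G] : Prop :=
  ∃ μ : Set G → ℝ,
    (∀ A : Set G, 0 ≤ μ A) ∧
    μ Set.univ = 1 ∧
    (∀ A B : Set G, Disjoint A B → μ (A ∪ B) = μ A + μ B) ∧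
    (∀ (g : G) (A : Set G), μ ((g * ·) '' A) = μ A)

section Amenable

variable {H G : Type*} [Group H] [Group G]

/-- Send `g` to the `h` with `f h = g * (representative of the coset f(H) g)⁻¹`. -/
lemma exists_retraction_mul_left (f : H →* G) (hf : Function.Injective f) :
    ∃ π : G → H, ∀ h g, π (f h * g) = h * π g := by
  classical
  let q : G → G := fun g => (Quotient.mk (QuotientGroup.rightRel f.range) g).out
  have hq : ∀ g, ∃ h, f h = g * (q g)⁻¹ := fun g => MonoidHom.mem_range.mp
    (QuotientGroup.rightRel_apply.mp (Quotient.exact (Quotient.out_eq (Quotient.mk _ g))))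
  choose π hπ using hq
  have hq_mul : ∀ h g, q (f h * g) = q g := fun h g => by
    have : Quotient.mk (QuotientGroup.rightRel f.range) (f h * g)
        = Quotient.mk (QuotientGroup.rightRel f.range) g :=
      Quotient.sound (QuotientGroup.rightRel_apply.mpr ⟨h⁻¹, by simp⟩)
    simp only [q, this]
  exact ⟨π, fun h g => hf (by rw [hπ, map_mul, hπ, hq_mul, mul_assoc])⟩

lemma IsAmenable.of_injective (f : H →* G) (hf : Function.Injective f) (hG : IsAmenable G) :
    IsAmenable H := by
  obtain ⟨μ, hpos, huniv, hadd, hinvar⟩ := hG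
  obtain ⟨π, hπ⟩ := exists_retraction_mul_left f hf
  have hpre : ∀ h (A : Set H), π ⁻¹' ((h * ·) '' A) = (f h * ·) '' (π ⁻¹' A) := by
    intro h A
    ext x
    constructor
    · rintro ⟨a, haA, hax⟩
      refine ⟨(f h)⁻¹ * x, ?_, by simp⟩
      rw [Set.mem_preimage, ← map_inv, hπ, ← hax, inv_mul_cancel_left]
      exact haA
    · rintro ⟨y, hy, rfl⟩
      exact ⟨π y, hy, (hπ h y).symm⟩
  refine ⟨fun A => μ (π ⁻¹' A), fun A => hpos _, huniv, fun A B hAB => ?_, fun h A => ?_⟩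
  · simp only [Set.preimage_union]
    exact hadd _ _ (hAB.preimage π)
  · simp only [hpre, hinvar]

lemma IsAmenable.subgroup_comap {f : H →* G} (hf : Function.Injective f) {K : Subgroup G}
    (hK : IsAmenable K) : IsAmenable (K.comap f) :=
  hK.of_injective (f.subgroupComap K) fun _ _ hab => Subtype.ext (hf (congrArg Subtype.val hab))

lemma IsAmenable.of_forall_mem {K : Subgroup G} (hK : IsAmenable K) (hmem : ∀ g, g ∈ K) :
    IsAmenable G :=
  hK.of_injective ((MonoidHom.id G).codRestrict K hmem)
    fun _ _ hab => congrArg Subtype.val hab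

end Amenable

namespace SimpleGraph.IsTree

variable {V : Type*} {T : SimpleGraph V}

/-- An injective endomorphism of a tree fixing the ends of a path maps the path to a path with
the same ends, which is the same path by uniqueness. -/
lemma apply_eq_of_mem_support (hT : T.IsTree) {f : T →g T} (hf : Function.Injective f)
    {v w : V} (hv : f v = v) (hw : f w = w) {p : T.Walk v w} (hp : p.IsPath) :
    ∀ x ∈ p.support, f x = x := by
  have hmap : (p.map f).copy hv hw = p :=
    congrArg Subtype.val ((hT.isAcyclic.subsingleton_path v w).elim
      ⟨_, (Walk.isPath_copy _ _ _).mpr (hp.map hf)⟩ ⟨p, hp⟩)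
  have hsupp := congrArg Walk.support hmap
  rw [Walk.support_copy, Walk.support_map] at hsupp
  exact List.map_eq_map_iff.mp (hsupp.trans (List.map_id _).symm)

lemma exists_adj_forall_apply_eq (hT : T.IsTree) {v w : V} (hne : v ≠ w) :
    ∃ x, T.Adj v x ∧ ∀ f : T →g T, Function.Injective f → f v = v → f w = w → f x = x := by
  obtain ⟨p, hp, -⟩ := hT.existsUnique_path v w
  cases p with
  | nil => exact absurd rfl hne
  | cons hadj q =>
    exact ⟨_, hadj, fun f hf hv hw =>
      hT.apply_eq_of_mem_support hf hv hw hp _ (List.mem_cons_of_mem _ q.start_mem_support)⟩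

end SimpleGraph.IsTree

section TreeAction

variable {V : Type*} {T : SimpleGraph V}

lemma IsAmenable.of_fixes_edge {G : Type*} [Group G] {ψ : G →* Equiv.Perm V} {u v : V}
    (hstab : IsAmenable ((MulAction.stabilizer (Equiv.Perm V) u ⊓
      MulAction.stabilizer (Equiv.Perm V) v).comap ψ))
    (hu : ∀ g, ψ g u = u) (hv : ∀ g, ψ g v = v) : IsAmenable G :=
  hstab.of_forall_mem fun g => ⟨hu g, hv g⟩

lemma eq_of_forall_apply_eq_of_not_isAmenable {G : Type*} [Group G] (hG : ¬ IsAmenable G)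
    (hT : T.IsTree) (ψ : G →* Equiv.Perm V)
    (hadj : ∀ g u v, T.Adj u v → T.Adj (ψ g u) (ψ g v))
    (hstab : ∀ u v, T.Adj u v → IsAmenable ((MulAction.stabilizer (Equiv.Perm V) u ⊓
      MulAction.stabilizer (Equiv.Perm V) v).comap ψ))
    {v w : V} (hv : ∀ g, ψ g v = v) (hw : ∀ g, ψ g w = w) : w = v := by
  by_contra hne
  obtain ⟨x, hvx, hx⟩ := hT.exists_adj_forall_apply_eq (Ne.symm hne)
  exact hG ((hstab v x hvx).of_fixes_edge hv fun g =>
    hx ⟨ψ g, hadj g _ _⟩ (ψ g).injective (hv g) (hw g))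

/-- `Γ × 1` commutes with `1 × Δ`, so it preserves the fixed set of `1 × Δ`. -/
lemma apply_eq_of_unique_fixed_inr {Γ Δ : Type*} [Group Γ] [Group Δ]
    (φ : Γ × Δ →* Equiv.Perm V) {v : V}
    (huniq : ∀ w, (∀ d : Δ, φ (1, d) w = w) → w = v) (hv : ∀ d : Δ, φ (1, d) v = v)
    (p : Γ × Δ) : φ p v = v := by
  have hΓ : φ (p.1, 1) v = v := huniq _ fun d => by
    rw [← Equiv.Perm.mul_apply, ← map_mul, show ((1 : Γ), d) * (p.1, 1) = (p.1, 1) * (1, d) by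
      ext <;> simp, map_mul, Equiv.Perm.mul_apply, hv]
  rw [show p = (p.1, 1) * (1, p.2) by ext <;> simp, map_mul, Equiv.Perm.mul_apply, hv, hΓ]

end TreeAction

theorem stmt6_general {Γ Δ : Type} [Group Γ] [Group Δ]
    (hΔ : ¬ IsAmenable Δ)
    {V : Type} (T : SimpleGraph V) (hT : T.IsTree)
    (φ : Γ × Δ →* Equiv.Perm V)
    (hadj : ∀ (p : Γ × Δ) (u v : V), T.Adj u v → T.Adj (φ p u) (φ p v))
    (hinv : ¬ ∃ (p : Γ × Δ) (u v : V), T.Adj u v ∧ φ p u = v ∧ φ p v = u)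
    (hfix : ¬ ∃ v : V, ∀ p : Γ × Δ, φ p v = v)
    (hstab : ∀ u v : V, T.Adj u v →
      IsAmenable ((MulAction.stabilizer (Equiv.Perm V) u ⊓
        MulAction.stabilizer (Equiv.Perm V) v).comap φ)) :
    (¬ ∃ v : V, ∀ d : Δ, (φ.comp (MonoidHom.inr Γ Δ)) d v = v) ∧
    (¬ ∃ (d : Δ) (u v : V), T.Adj u v ∧
        (φ.comp (MonoidHom.inr Γ Δ)) d u = v ∧ (φ.comp (MonoidHom.inr Γ Δ)) d v = u) ∧
    (∀ u v : V, T.Adj u v →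
      IsAmenable ((MulAction.stabilizer (Equiv.Perm V) u ⊓
        MulAction.stabilizer (Equiv.Perm V) v).comap (φ.comp (MonoidHom.inr Γ Δ)))) := by
  have hstabΔ : ∀ u v, T.Adj u v → IsAmenable ((MulAction.stabilizer (Equiv.Perm V) u ⊓
      MulAction.stabilizer (Equiv.Perm V) v).comap (φ.comp (MonoidHom.inr Γ Δ))) :=
    fun u v huv => by
      rw [← Subgroup.comap_comap]
      exact (hstab u v huv).subgroup_comap fun _ _ h => congrArg Prod.snd h
  refine ⟨fun ⟨v, hv⟩ => hfix ⟨v, apply_eq_of_unique_fixed_inr φ (fun w hw => ?_) hv⟩,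
    fun ⟨d, u, v, h⟩ => hinv ⟨(1, d), u, v, h⟩, hstabΔ⟩
  exact eq_of_forall_apply_eq_of_not_isAmenable hΔ hT _ (fun d => hadj (1, d)) hstabΔ hv hw

/-- Let `Γ` be amenable, `Δ` non-amenable, and suppose `Γ × Δ` acts on a tree by graph
automorphisms with no edge inversions, no globally fixed vertex, and amenable edge
stabilizers. Then the restricted action of `Δ` (via the inclusion `Δ → Γ × Δ`) also has
no globally fixed vertex, no edge inversions, and amenable edge stabilizers. -/
theorem stmt6 {Γ Δ : Type} [Group Γ] [Group Δ]
    (hΓ : IsAmenable Γ) (hΔ : ¬ IsAmenable Δ)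
    {V : Type} (T : SimpleGraph V) (hT : T.IsTree)
    (φ : Γ × Δ →* Equiv.Perm V)
    (hadj : ∀ (p : Γ × Δ) (u v : V), T.Adj u v → T.Adj (φ p u) (φ p v))
    (hinv : ¬ ∃ (p : Γ × Δ) (u v : V), T.Adj u v ∧ φ p u = v ∧ φ p v = u)
    (hfix : ¬ ∃ v : V, ∀ p : Γ × Δ, φ p v = v)
    (hstab : ∀ u v : V, T.Adj u v →
      IsAmenable ((MulAction.stabilizer (Equiv.Perm V) u ⊓
        MulAction.stabilizer (Equiv.Perm V) v).comap φ)) :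
    (¬ ∃ v : V, ∀ d : Δ, (φ.comp (MonoidHom.inr Γ Δ)) d v = v) ∧
    (¬ ∃ (d : Δ) (u v : V), T.Adj u v ∧
        (φ.comp (MonoidHom.inr Γ Δ)) d u = v ∧ (φ.comp (MonoidHom.inr Γ Δ)) d v = u) ∧
    (∀ u v : V, T.Adj u v →
      IsAmenable ((MulAction.stabilizer (Equiv.Perm V) u ⊓
        MulAction.stabilizer (Equiv.Perm V) v).comap (φ.comp (MonoidHom.inr Γ Δ)))) :=
  stmt6_general hΔ T hT φ hadj hinv hfix hstab
end

section
/- Let g be an element of a graph product Γ(G) over a finite simple graph G = (V,E). Define tail(g) as the set of vertices v ∈ V such that some graphically reduced writing of g ends with a syllable from Γ_v. Then tail(g) is a clique of G: any two distinct vertices in tail(g) are adjacent. -/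
open Monoid

/-- The commutation relators of a graph product: commutators of elements of vertex
groups attached to adjacent vertices. -/
def gpRels {V : Type} (G : SimpleGraph V) (Γ : V → Type) [∀ v, Group (Γ v)] :
    Set (CoprodI Γ) :=
  {w | ∃ (u v : V) (a : Γ u) (b : Γ v), G.Adj u v ∧
    w = CoprodI.of a * CoprodI.of b * (CoprodI.of a)⁻¹ * (CoprodI.of b)⁻¹}

/-- The graph product of the groups `Γ v` over the graph `G`: the free product
modulo the commutation relations given by the edges of `G`. -/
def GraphProduct {V : Type} (G : SimpleGraph V) (Γ : V → Type) [∀ v, Group (Γ v)] :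
    Type :=
  CoprodI Γ ⧸ Subgroup.normalClosure (gpRels G Γ)

instance {V : Type} (G : SimpleGraph V) (Γ : V → Type) [∀ v, Group (Γ v)] :
    Group (GraphProduct G Γ) :=
  QuotientGroup.Quotient.group _

/-- The canonical projection from the free product to the graph product. -/
def gpMk {V : Type} (G : SimpleGraph V) (Γ : V → Type) [∀ v, Group (Γ v)] :
    CoprodI Γ →* GraphProduct G Γ :=
  QuotientGroup.mk' _

/-- Evaluation of a writing (a list of syllables) in the graph product. -/
def evalWord {V : Type} (G : SimpleGraph V) (Γ : V → Type) [∀ v, Group (Γ v)]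
    (w : List (Σ v : V, Γ v)) : GraphProduct G Γ :=
  (w.map fun p => gpMk G Γ (CoprodI.of p.2)).prod

/-- The elementary rewriting operations on writings: merging two adjacent syllables
from the same vertex group, deleting an identity syllable, and swapping adjacent
syllables from adjacent (commuting) vertex groups. -/
inductive WStep {V : Type} (G : SimpleGraph V) (Γ : V → Type) [∀ v, Group (Γ v)] :
    List (Σ v : V, Γ v) → List (Σ v : V, Γ v) → Prop
  | merge (w₁ w₂ : List (Σ v : V, Γ v)) (v : V) (a b : Γ v) :
      WStep G Γ (w₁ ++ ⟨v, a⟩ :: ⟨v, b⟩ :: w₂) (w₁ ++ ⟨v, a * b⟩ :: w₂)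
  | delete (w₁ w₂ : List (Σ v : V, Γ v)) (v : V) :
      WStep G Γ (w₁ ++ ⟨v, (1 : Γ v)⟩ :: w₂) (w₁ ++ w₂)
  | swap (w₁ w₂ : List (Σ v : V, Γ v)) (u v : V) (a : Γ u) (b : Γ v)
      (h : G.Adj u v) :
      WStep G Γ (w₁ ++ ⟨u, a⟩ :: ⟨v, b⟩ :: w₂) (w₁ ++ ⟨v, b⟩ :: ⟨u, a⟩ :: w₂)

/-- A writing is graphically reduced if no sequence of elementary operations can
shorten it. -/
def ReducedWord {V : Type} (G : SimpleGraph V) (Γ : V → Type) [∀ v, Group (Γ v)]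
    (w : List (Σ v : V, Γ v)) : Prop :=
  ∀ w', Relation.ReflTransGen (WStep G Γ) w w' → w.length ≤ w'.length

/-- `tail g` is the set of vertices `v` such that some graphically reduced writing
of `g` ends with a syllable from `Γ v`. -/
def tail {V : Type} (G : SimpleGraph V) (Γ : V → Type) [∀ v, Group (Γ v)]
    (g : GraphProduct G Γ) : Set V :=
  {v | ∃ (w : List (Σ v : V, Γ v)) (p : Σ v : V, Γ v),
    ReducedWord G Γ w ∧ evalWord G Γ w = g ∧ w.getLast? = some p ∧ p.1 = v}

/-!
By the normal form theorem, two graphically reduced writings of `g` differ by swaps of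
adjacent commuting syllables. Reversing the writings, the last syllable `⟨u, a⟩` of the
first one is the head of its reversal, and a head syllable at `u` stays a head syllable
through swaps: in every swap-equivalent word it is preceded only by syllables at
neighbours of `u`. So the last syllable of the second writing, at `v ≠ u`, sits at a
neighbour of `u`.

The normal form theorem is proved by van der Waerden's trick: `Γ v` acts on
swap-classes of locally reduced words by multiplying into the `v`-syllable that can be
moved to the front; these actions commute for adjacent vertices, so they assemble into
an action of the graph product, and a locally reduced word `w` is recovered as
`evalWord w • []`.
-/

namespace GraphProduct

variable {V : Type} {G : SimpleGraph V} {Γ : V → Type}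

variable (G Γ) in
inductive SwapStep : List (Σ v, Γ v) → List (Σ v, Γ v) → Prop
  | swap {u v : V} (a : Γ u) (b : Γ v) (w : List (Σ v, Γ v)) (h : G.Adj u v) :
      SwapStep (⟨u, a⟩ :: ⟨v, b⟩ :: w) (⟨v, b⟩ :: ⟨u, a⟩ :: w)
  | cons (p : Σ v, Γ v) {w w' : List (Σ v, Γ v)} :
      SwapStep w w' → SwapStep (p :: w) (p :: w')

variable (G Γ) in
def SwapEquiv : List (Σ v, Γ v) → List (Σ v, Γ v) → Prop :=
  Relation.ReflTransGen (SwapStep G Γ)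

theorem SwapStep.symm {w w' : List (Σ v, Γ v)} (h : SwapStep G Γ w w') :
    SwapStep G Γ w' w := by
  induction h with
  | swap a b w h => exact .swap b a w h.symm
  | cons p _ ih => exact .cons p ih

theorem SwapStep.append_left (l : List (Σ v, Γ v)) {w w' : List (Σ v, Γ v)}
    (h : SwapStep G Γ w w') : SwapStep G Γ (l ++ w) (l ++ w') := by
  induction l with
  | nil => exact h
  | cons p l ih => exact .cons p ih

theorem SwapStep.append_right {w w' : List (Σ v, Γ v)} (h : SwapStep G Γ w w')
    (l : List (Σ v, Γ v)) : SwapStep G Γ (w ++ l) (w' ++ l) := by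
  induction h with
  | swap a b w h => exact .swap a b _ h
  | cons p _ ih => exact .cons p ih

theorem SwapStep.reverse {w w' : List (Σ v, Γ v)} (h : SwapStep G Γ w w') :
    SwapStep G Γ w.reverse w'.reverse := by
  induction h with
  | swap a b w h => simpa using (SwapStep.swap b a [] h.symm).append_left w.reverse
  | cons p _ ih => simpa using ih.append_right [p]

theorem SwapEquiv.refl (w : List (Σ v, Γ v)) : SwapEquiv G Γ w w :=
  Relation.ReflTransGen.refl

theorem SwapEquiv.symm {w w' : List (Σ v, Γ v)} (h : SwapEquiv G Γ w w') :
    SwapEquiv G Γ w' w :=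
  haveI : Std.Symm (SwapStep G Γ) := ⟨fun _ _ => SwapStep.symm⟩
  Relation.ReflTransGen.stdSymm.symm _ _ h

theorem SwapEquiv.trans {w₁ w₂ w₃ : List (Σ v, Γ v)} (h : SwapEquiv G Γ w₁ w₂)
    (h' : SwapEquiv G Γ w₂ w₃) : SwapEquiv G Γ w₁ w₃ :=
  Relation.ReflTransGen.trans h h'

theorem SwapEquiv.cons (p : Σ v, Γ v) {w w' : List (Σ v, Γ v)} (h : SwapEquiv G Γ w w') :
    SwapEquiv G Γ (p :: w) (p :: w') :=
  Relation.ReflTransGen.lift (List.cons p) (fun _ _ => SwapStep.cons p) _ _ h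

theorem SwapEquiv.reverse {w w' : List (Σ v, Γ v)} (h : SwapEquiv G Γ w w') :
    SwapEquiv G Γ w.reverse w'.reverse :=
  Relation.ReflTransGen.lift List.reverse (fun _ _ => SwapStep.reverse) _ _ h

variable (G Γ) in
def swapSetoid : Setoid (List (Σ v, Γ v)) :=
  ⟨SwapEquiv G Γ, ⟨SwapEquiv.refl, SwapEquiv.symm, SwapEquiv.trans⟩⟩

variable (G Γ) in
/-- `HeadSplit v c w r`: the syllable `⟨v, c⟩` of `w` is preceded only by syllables
commuting with `Γ v`, and removing it from `w` leaves `r`. -/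
inductive HeadSplit (v : V) (c : Γ v) : List (Σ v, Γ v) → List (Σ v, Γ v) → Prop
  | head (w : List (Σ v, Γ v)) : HeadSplit v c (⟨v, c⟩ :: w) w
  | cons (p : Σ v, Γ v) {w r : List (Σ v, Γ v)} (h : G.Adj v p.1) :
      HeadSplit v c w r → HeadSplit v c (p :: w) (p :: r)

theorem HeadSplit.unique {v : V} {c c' : Γ v} {w r r' : List (Σ v, Γ v)}
    (h : HeadSplit G Γ v c w r) (h' : HeadSplit G Γ v c' w r') : c = c' ∧ r = r' := by
  induction h generalizing r' with
  | head w =>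
    cases h' with
    | head => exact ⟨rfl, rfl⟩
    | cons _ hadj _ => exact (G.irrefl hadj).elim
  | cons p hadj _ ih =>
    cases h' with
    | head => exact (G.irrefl hadj).elim
    | cons _ _ h' => exact ⟨(ih h').1, by rw [(ih h').2]⟩

theorem HeadSplit.length_eq {v : V} {c : Γ v} {w r : List (Σ v, Γ v)}
    (h : HeadSplit G Γ v c w r) : w.length = r.length + 1 := by
  induction h <;> simp [*]

theorem HeadSplit.swapEquiv {v : V} {c : Γ v} {w r : List (Σ v, Γ v)}
    (h : HeadSplit G Γ v c w r) : SwapEquiv G Γ w (⟨v, c⟩ :: r) := by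
  induction h with
  | head w => exact .refl _
  | cons p hadj _ ih => exact (ih.cons p).tail (.swap p.2 c _ hadj.symm)

theorem HeadSplit.adj_of_cons {v : V} {c : Γ v} {p : Σ v, Γ v} {w r : List (Σ v, Γ v)}
    (h : HeadSplit G Γ v c (p :: w) r) (hne : p.1 ≠ v) :
    G.Adj v p.1 ∧ ∃ r₀, r = p :: r₀ ∧ HeadSplit G Γ v c w r₀ := by
  cases h with
  | head => exact absurd rfl hne
  | cons _ hadj h => exact ⟨hadj, _, rfl, h⟩

theorem HeadSplit.of_swapStep {v : V} {c : Γ v} {w w' r : List (Σ v, Γ v)}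
    (hs : SwapStep G Γ w w') (h : HeadSplit G Γ v c w r) :
    ∃ r', HeadSplit G Γ v c w' r' ∧ SwapEquiv G Γ r r' := by
  induction hs generalizing r with
  | swap a b w hadj =>
    cases h with
    | head => exact ⟨_, .cons _ hadj (.head _), .refl _⟩
    | cons _ hadj₁ h =>
      cases h with
      | head => exact ⟨_, .head _, .refl _⟩
      | cons _ hadj₂ h =>
        exact ⟨_, .cons _ hadj₂ (.cons _ hadj₁ h), .single (.swap a b _ hadj)⟩
  | cons p hs ih =>
    cases h with
    | head => exact ⟨_, .head _, .single hs⟩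
    | cons _ hadj h =>
      obtain ⟨r', hr', hrr'⟩ := ih h
      exact ⟨_, .cons _ hadj hr', hrr'.cons p⟩

theorem HeadSplit.of_swapEquiv {v : V} {c : Γ v} {w w' r : List (Σ v, Γ v)}
    (hs : SwapEquiv G Γ w w') (h : HeadSplit G Γ v c w r) :
    ∃ r', HeadSplit G Γ v c w' r' ∧ SwapEquiv G Γ r r' := by
  induction hs with
  | refl => exact ⟨r, h, .refl _⟩
  | tail _ hs ih =>
    obtain ⟨r', hr', hrr'⟩ := ih
    obtain ⟨r'', hr'', hr'r''⟩ := hr'.of_swapStep hs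
    exact ⟨r'', hr'', hrr'.trans hr'r''⟩

theorem HeadSplit.comm {u v : V} {d : Γ u} {c : Γ v} {w s r : List (Σ v, Γ v)}
    (hu : HeadSplit G Γ u d w s) (hv : HeadSplit G Γ v c w r) (hne : u ≠ v) :
    ∃ t, HeadSplit G Γ v c s t ∧ HeadSplit G Γ u d r t := by
  induction hu generalizing r with
  | head w =>
    obtain ⟨-, r₀, rfl, h⟩ := hv.adj_of_cons hne
    exact ⟨r₀, h, .head _⟩
  | cons p hadj hu ih =>
    cases hv with
    | head => exact ⟨_, .head _, hu⟩
    | cons _ hadj' hv =>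
      obtain ⟨t, ht₁, ht₂⟩ := ih hv
      exact ⟨p :: t, .cons p hadj' ht₁, .cons p hadj ht₂⟩

theorem HeadSplit.extend {u v : V} {d : Γ u} {c : Γ v} {w s t : List (Σ v, Γ v)}
    (hu : HeadSplit G Γ u d w s) (hv : HeadSplit G Γ v c s t) (hadj : G.Adj u v) :
    ∃ r, HeadSplit G Γ v c w r := by
  induction hu generalizing t with
  | head w => exact ⟨_, .cons ⟨u, d⟩ hadj.symm hv⟩
  | cons p _ _ ih =>
    cases hv with
    | head => exact ⟨_, .head _⟩
    | cons _ hadj' hv =>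
      obtain ⟨r, hr⟩ := ih hv
      exact ⟨p :: r, .cons p hadj' hr⟩

variable (G Γ) in
def NoHead (v : V) (w : List (Σ v, Γ v)) : Prop :=
  ∀ c r, ¬HeadSplit G Γ v c w r

variable (G) in
theorem noHead_or_exists_headSplit (v : V) (w : List (Σ v, Γ v)) :
    NoHead G Γ v w ∨ ∃ c r, HeadSplit G Γ v c w r := by
  by_cases h : NoHead G Γ v w
  · exact .inl h
  · right; simpa [NoHead] using h

theorem NoHead.cons {u v : V} (x : Γ u) {w : List (Σ v, Γ v)} (hne : u ≠ v)
    (h : NoHead G Γ v w) : NoHead G Γ v (⟨u, x⟩ :: w) := fun c _ hs =>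
  let ⟨_, _, _, hs⟩ := hs.adj_of_cons hne
  h c _ hs

theorem NoHead.of_cons {u v : V} {x : Γ u} {w : List (Σ v, Γ v)} (hadj : G.Adj v u)
    (h : NoHead G Γ v (⟨u, x⟩ :: w)) : NoHead G Γ v w := fun c _ hs =>
  h c _ (.cons _ hadj hs)

theorem NoHead.of_swapEquiv {v : V} {w w' : List (Σ v, Γ v)} (hs : SwapEquiv G Γ w w')
    (h : NoHead G Γ v w) : NoHead G Γ v w' := fun c _ h' =>
  let ⟨_, h', _⟩ := h'.of_swapEquiv hs.symm
  h c _ h'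

theorem NoHead.of_headSplit {u v : V} {d : Γ u} {w s : List (Σ v, Γ v)}
    (hu : HeadSplit G Γ u d w s) (hadj : G.Adj u v) (h : NoHead G Γ v w) :
    NoHead G Γ v s := fun c _ hv =>
  let ⟨_, hw⟩ := hu.extend hv hadj
  h c _ hw

variable [∀ v, Group (Γ v)]

variable (G Γ) in
/-- No syllable is trivial, and none can be swapped next to a later syllable of its own
vertex group and merged with it. -/
inductive LocallyReduced : List (Σ v, Γ v) → Prop
  | nil : LocallyReduced []
  | cons {v : V} {a : Γ v} {w : List (Σ v, Γ v)} (ha : a ≠ 1) (hw : NoHead G Γ v w) :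
      LocallyReduced w → LocallyReduced (⟨v, a⟩ :: w)

theorem LocallyReduced.of_swapStep {w w' : List (Σ v, Γ v)} (hs : SwapStep G Γ w w')
    (h : LocallyReduced G Γ w) : LocallyReduced G Γ w' := by
  induction hs with
  | swap a b w hadj =>
    obtain _ | ⟨ha, hbw, _ | ⟨hb, hw, h⟩⟩ := h
    exact .cons hb (hw.cons a hadj.ne) (.cons ha (hbw.of_cons hadj) h)
  | cons p hs ih =>
    obtain _ | ⟨ha, hw, h⟩ := h
    exact .cons ha (hw.of_swapEquiv (.single hs)) (ih h)

theorem LocallyReduced.of_swapEquiv {w w' : List (Σ v, Γ v)} (hs : SwapEquiv G Γ w w')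
    (h : LocallyReduced G Γ w) : LocallyReduced G Γ w' := by
  induction hs with
  | refl => exact h
  | tail _ hs ih => exact ih.of_swapStep hs

theorem LocallyReduced.of_headSplit {v : V} {c : Γ v} {w r : List (Σ v, Γ v)}
    (h : LocallyReduced G Γ w) (hs : HeadSplit G Γ v c w r) :
    c ≠ 1 ∧ NoHead G Γ v r ∧ LocallyReduced G Γ r := by
  obtain _ | ⟨hc, hr, h⟩ := h.of_swapEquiv hs.swapEquiv
  exact ⟨hc, hr, h⟩

open Classical in
variable (G Γ) in
noncomputable def splitHead (v : V) (w : List (Σ v, Γ v)) : Γ v × List (Σ v, Γ v) :=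
  if h : ∃ x : Γ v × List (Σ v, Γ v), HeadSplit G Γ v x.1 w x.2 then h.choose else (1, w)

theorem splitHead_eq_of_headSplit {v : V} {c : Γ v} {w r : List (Σ v, Γ v)}
    (h : HeadSplit G Γ v c w r) : splitHead G Γ v w = (c, r) := by
  have hex : ∃ x : Γ v × List (Σ v, Γ v), HeadSplit G Γ v x.1 w x.2 := ⟨(c, r), h⟩
  rw [splitHead, dif_pos hex]
  obtain ⟨hc, hr⟩ := hex.choose_spec.unique h
  exact Prod.ext hc hr

theorem splitHead_eq_of_noHead {v : V} {w : List (Σ v, Γ v)} (h : NoHead G Γ v w) :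
    splitHead G Γ v w = (1, w) :=
  dif_neg fun ⟨x, hx⟩ => h x.1 x.2 hx

theorem splitHead_cons_of_adj {u v : V} (x : Γ u) (w : List (Σ v, Γ v)) (hadj : G.Adj v u) :
    splitHead G Γ v (⟨u, x⟩ :: w) =
      ((splitHead G Γ v w).1, ⟨u, x⟩ :: (splitHead G Γ v w).2) := by
  obtain hw | ⟨c, r, hw⟩ := noHead_or_exists_headSplit G v w
  · rw [splitHead_eq_of_noHead hw, splitHead_eq_of_noHead (hw.cons x hadj.ne.symm)]
  · rw [splitHead_eq_of_headSplit hw, splitHead_eq_of_headSplit (.cons _ hadj hw)]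

theorem splitHead_swapEquiv (v : V) {w w' : List (Σ v, Γ v)} (hs : SwapEquiv G Γ w w') :
    (splitHead G Γ v w).1 = (splitHead G Γ v w').1 ∧
      SwapEquiv G Γ (splitHead G Γ v w).2 (splitHead G Γ v w').2 := by
  obtain hw | ⟨c, r, hw⟩ := noHead_or_exists_headSplit G v w
  · rw [splitHead_eq_of_noHead hw, splitHead_eq_of_noHead (hw.of_swapEquiv hs)]
    exact ⟨rfl, hs⟩
  · obtain ⟨r', hw', hrr'⟩ := hw.of_swapEquiv hs
    rw [splitHead_eq_of_headSplit hw, splitHead_eq_of_headSplit hw']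
    exact ⟨rfl, hrr'⟩

theorem LocallyReduced.splitHead {w : List (Σ v, Γ v)} (h : LocallyReduced G Γ w) (v : V) :
    NoHead G Γ v (splitHead G Γ v w).2 ∧ LocallyReduced G Γ (splitHead G Γ v w).2 := by
  obtain hw | ⟨c, r, hw⟩ := noHead_or_exists_headSplit G v w
  · rw [splitHead_eq_of_noHead hw]
    exact ⟨hw, h⟩
  · rw [splitHead_eq_of_headSplit hw]
    exact (h.of_headSplit hw).2

theorem splitHead_comm {u v : V} (hadj : G.Adj u v) (w : List (Σ v, Γ v)) :
    ∃ t, splitHead G Γ v (splitHead G Γ u w).2 = ((splitHead G Γ v w).1, t) ∧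
      splitHead G Γ u (splitHead G Γ v w).2 = ((splitHead G Γ u w).1, t) := by
  obtain hu | ⟨d, s, hu⟩ := noHead_or_exists_headSplit G u w <;>
    obtain hv | ⟨c, r, hv⟩ := noHead_or_exists_headSplit G v w
  · simp only [splitHead_eq_of_noHead hu, splitHead_eq_of_noHead hv]
    exact ⟨w, rfl, rfl⟩
  · simp only [splitHead_eq_of_noHead hu, splitHead_eq_of_headSplit hv,
      splitHead_eq_of_noHead (hu.of_headSplit hv hadj.symm)]
    exact ⟨r, rfl, rfl⟩
  · simp only [splitHead_eq_of_headSplit hu, splitHead_eq_of_noHead hv,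
      splitHead_eq_of_noHead (hv.of_headSplit hu hadj)]
    exact ⟨s, rfl, rfl⟩
  · obtain ⟨t, hvt, hut⟩ := hu.comm hv hadj.ne
    simp only [splitHead_eq_of_headSplit hu, splitHead_eq_of_headSplit hv,
      splitHead_eq_of_headSplit hvt, splitHead_eq_of_headSplit hut]
    exact ⟨t, rfl, rfl⟩

open Classical in
variable (Γ) in
noncomputable def smartCons (v : V) (x : Γ v) (w : List (Σ v, Γ v)) : List (Σ v, Γ v) :=
  if x = 1 then w else ⟨v, x⟩ :: w

theorem smartCons_of_ne_one {v : V} {x : Γ v} (hx : x ≠ 1) (w : List (Σ v, Γ v)) :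
    smartCons Γ v x w = ⟨v, x⟩ :: w :=
  if_neg hx

theorem SwapEquiv.smartCons (v : V) (x : Γ v) {w w' : List (Σ v, Γ v)}
    (h : SwapEquiv G Γ w w') : SwapEquiv G Γ (smartCons Γ v x w) (smartCons Γ v x w') := by
  unfold GraphProduct.smartCons
  split_ifs
  exacts [h, h.cons _]

theorem smartCons_comm {u v : V} (hadj : G.Adj u v) (x : Γ u) (y : Γ v)
    (w : List (Σ v, Γ v)) :
    SwapEquiv G Γ (smartCons Γ u x (smartCons Γ v y w))
      (smartCons Γ v y (smartCons Γ u x w)) := by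
  unfold smartCons
  split_ifs
  exacts [.refl _, .refl _, .refl _, .single (.swap x y w hadj)]

theorem locallyReduced_smartCons {v : V} (x : Γ v) {w : List (Σ v, Γ v)}
    (h : LocallyReduced G Γ w) (hw : NoHead G Γ v w) :
    LocallyReduced G Γ (smartCons Γ v x w) := by
  unfold smartCons
  split_ifs with hx
  exacts [h, .cons hx hw h]

theorem splitHead_smartCons_self {v : V} (x : Γ v) {w : List (Σ v, Γ v)}
    (hw : NoHead G Γ v w) : splitHead G Γ v (smartCons Γ v x w) = (x, w) := by
  unfold smartCons
  split_ifs with hx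
  · rw [splitHead_eq_of_noHead hw, hx]
  · exact splitHead_eq_of_headSplit (.head w)

theorem splitHead_smartCons_of_adj {u v : V} (hadj : G.Adj v u) (x : Γ u)
    (w : List (Σ v, Γ v)) :
    splitHead G Γ v (smartCons Γ u x w) =
      ((splitHead G Γ v w).1, smartCons Γ u x (splitHead G Γ v w).2) := by
  unfold smartCons
  split_ifs
  exacts [rfl, splitHead_cons_of_adj x w hadj]

variable (G Γ) in
noncomputable def headAct (v : V) (a : Γ v) (w : List (Σ v, Γ v)) : List (Σ v, Γ v) :=
  smartCons Γ v (a * (splitHead G Γ v w).1) (splitHead G Γ v w).2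

theorem locallyReduced_headAct {w : List (Σ v, Γ v)} (h : LocallyReduced G Γ w) (v : V)
    (a : Γ v) : LocallyReduced G Γ (headAct G Γ v a w) :=
  locallyReduced_smartCons _ (h.splitHead v).2 (h.splitHead v).1

theorem SwapEquiv.headAct (v : V) (a : Γ v) {w w' : List (Σ v, Γ v)}
    (h : SwapEquiv G Γ w w') : SwapEquiv G Γ (headAct G Γ v a w) (headAct G Γ v a w') := by
  obtain ⟨h₁, h₂⟩ := splitHead_swapEquiv v h
  rw [GraphProduct.headAct, GraphProduct.headAct, h₁]
  exact h₂.smartCons v _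

theorem LocallyReduced.headAct_one {w : List (Σ v, Γ v)} (h : LocallyReduced G Γ w) (v : V) :
    SwapEquiv G Γ (headAct G Γ v 1 w) w := by
  obtain hw | ⟨c, r, hw⟩ := noHead_or_exists_headSplit G v w
  · rw [GraphProduct.headAct, splitHead_eq_of_noHead hw, mul_one, smartCons, if_pos rfl]
    exact .refl w
  · rw [GraphProduct.headAct, splitHead_eq_of_headSplit hw, one_mul,
      smartCons_of_ne_one (h.of_headSplit hw).1]
    exact hw.swapEquiv.symm

theorem LocallyReduced.headAct_mul {w : List (Σ v, Γ v)} (h : LocallyReduced G Γ w) (v : V)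
    (a b : Γ v) : headAct G Γ v a (headAct G Γ v b w) = headAct G Γ v (a * b) w := by
  rw [headAct, headAct, headAct, splitHead_smartCons_self _ (h.splitHead v).1, mul_assoc]

theorem headAct_comm {u v : V} (hadj : G.Adj u v) (a : Γ u) (b : Γ v) (w : List (Σ v, Γ v)) :
    SwapEquiv G Γ (headAct G Γ u a (headAct G Γ v b w))
      (headAct G Γ v b (headAct G Γ u a w)) := by
  obtain ⟨t, hvt, hut⟩ := splitHead_comm hadj w
  simp only [headAct, splitHead_smartCons_of_adj hadj, splitHead_smartCons_of_adj hadj.symm,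
    hvt, hut]
  exact smartCons_comm hadj _ _ t

theorem LocallyReduced.headAct_cons {v : V} {a : Γ v} {w : List (Σ v, Γ v)}
    (h : LocallyReduced G Γ (⟨v, a⟩ :: w)) : headAct G Γ v a w = ⟨v, a⟩ :: w := by
  obtain _ | ⟨ha, hw, -⟩ := h
  rw [headAct, splitHead_eq_of_noHead hw, mul_one, smartCons_of_ne_one ha]

variable (G Γ) in
def NormalForm : Type :=
  Quotient ((swapSetoid G Γ).comap (Subtype.val : {w // LocallyReduced G Γ w} → _))

def NormalForm.mk {w : List (Σ v, Γ v)} (h : LocallyReduced G Γ w) : NormalForm G Γ :=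
  Quotient.mk _ ⟨w, h⟩

theorem NormalForm.mk_eq_mk_iff {w w' : List (Σ v, Γ v)} (h : LocallyReduced G Γ w)
    (h' : LocallyReduced G Γ w') : NormalForm.mk h = NormalForm.mk h' ↔ SwapEquiv G Γ w w' :=
  Quotient.eq

variable (G Γ) in
noncomputable abbrev vertexAction (v : V) : MulAction (Γ v) (NormalForm G Γ) where
  smul a := Quotient.map (fun w => ⟨headAct G Γ v a w.1, locallyReduced_headAct w.2 v a⟩)
    fun _ _ h => h.headAct v a
  one_smul := Quotient.ind fun w => Quotient.sound (w.2.headAct_one v)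
  mul_smul a b := Quotient.ind fun w => Quotient.sound <| by
    simp only [Setoid.comap_rel, w.2.headAct_mul]
    exact .refl _

variable (G Γ) in
noncomputable def vertexPerm (v : V) : Γ v →* Equiv.Perm (NormalForm G Γ) :=
  letI := vertexAction G Γ v
  MulAction.toPermHom (Γ v) (NormalForm G Γ)

theorem vertexPerm_mk (v : V) (a : Γ v) {w : List (Σ v, Γ v)} (h : LocallyReduced G Γ w) :
    vertexPerm G Γ v a (NormalForm.mk h) = NormalForm.mk (locallyReduced_headAct h v a) :=
  rfl

theorem vertexPerm_commute {u v : V} (hadj : G.Adj u v) (a : Γ u) (b : Γ v) :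
    Commute (vertexPerm G Γ u a) (vertexPerm G Γ v b) :=
  Equiv.ext <| Quotient.ind fun w => Quotient.sound (headAct_comm hadj a b w.1)

variable (G Γ) in
noncomputable def normalFormPerm : GraphProduct G Γ →* Equiv.Perm (NormalForm G Γ) :=
  QuotientGroup.lift _ (CoprodI.lift (vertexPerm G Γ)) <| by
    refine Subgroup.normalClosure_le_normal ?_
    rintro _ ⟨u, v, a, b, hadj, rfl⟩
    simp only [SetLike.mem_coe, MonoidHom.mem_ker, map_mul, map_inv, CoprodI.lift_of,
      mul_inv_eq_iff_eq_mul]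
    exact vertexPerm_commute hadj a b

theorem normalFormPerm_evalWord {w : List (Σ v, Γ v)} (h : LocallyReduced G Γ w) :
    normalFormPerm G Γ (evalWord G Γ w) (NormalForm.mk .nil) = NormalForm.mk h := by
  induction h with
  | nil => simp [evalWord]
  | @cons v a w ha hw h ih =>
    have hcons := (LocallyReduced.cons ha hw h).headAct_cons
    simp only [evalWord, List.map_cons, List.prod_cons, map_mul, Equiv.Perm.mul_apply] at ih ⊢
    rw [ih]
    exact (vertexPerm_mk v a h).trans (by simp_rw [hcons])

theorem swapEquiv_of_evalWord_eq {w w' : List (Σ v, Γ v)} (h : LocallyReduced G Γ w)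
    (h' : LocallyReduced G Γ w') (heq : evalWord G Γ w = evalWord G Γ w') :
    SwapEquiv G Γ w w' := by
  rw [← NormalForm.mk_eq_mk_iff h h', ← normalFormPerm_evalWord h,
    ← normalFormPerm_evalWord h', heq]

theorem _root_.WStep.cons (p : Σ v, Γ v) {w w' : List (Σ v, Γ v)} (h : WStep G Γ w w') :
    WStep G Γ (p :: w) (p :: w') := by
  cases h with
  | merge w₁ w₂ v a b => exact .merge (p :: w₁) w₂ v a b
  | delete w₁ w₂ v => exact .delete (p :: w₁) w₂ v
  | swap w₁ w₂ u v a b h => exact .swap (p :: w₁) w₂ u v a b h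

theorem SwapStep.wStep {w w' : List (Σ v, Γ v)} (h : SwapStep G Γ w w') : WStep G Γ w w' := by
  induction h with
  | swap a b w h => exact .swap [] w _ _ a b h
  | cons p _ ih => exact ih.cons p

theorem SwapEquiv.reflTransGen_wStep {w w' : List (Σ v, Γ v)} (h : SwapEquiv G Γ w w') :
    Relation.ReflTransGen (WStep G Γ) w w' :=
  Relation.ReflTransGen.mono (fun _ _ => SwapStep.wStep) _ _ h

theorem _root_.ReducedWord.of_cons {p : Σ v, Γ v} {w : List (Σ v, Γ v)}
    (h : ReducedWord G Γ (p :: w)) : ReducedWord G Γ w := fun w' hw' => by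
  simpa using
    h (p :: w') (Relation.ReflTransGen.lift (List.cons p) (fun _ _ => WStep.cons p) _ _ hw')

theorem _root_.ReducedWord.locallyReduced {w : List (Σ v, Γ v)} (h : ReducedWord G Γ w) :
    LocallyReduced G Γ w := by
  induction w with
  | nil => exact .nil
  | cons p w ih =>
    obtain ⟨v, a⟩ := p
    refine .cons (fun ha => ?_) (fun c r hs => ?_) (ih h.of_cons)
    · subst ha
      simpa using h w (.single (.delete [] w v))
    · have hmerge : Relation.ReflTransGen (WStep G Γ) (⟨v, a⟩ :: w) (⟨v, a * c⟩ :: r) :=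
        (hs.swapEquiv.cons _).reflTransGen_wStep.tail (.merge [] r v a c)
      simpa [hs.length_eq] using h _ hmerge

end GraphProduct

/-- For any element `g` of a graph product, `tail g` is a clique of the defining
graph. -/
theorem stmt12 {V : Type} (G : SimpleGraph V) (Γ : V → Type) [∀ v, Group (Γ v)]
    (g : GraphProduct G Γ) : G.IsClique (tail G Γ g) := by
  rintro u ⟨w, p, hw, rfl, hp, rfl⟩ v ⟨w', p', hw', heq, hp', rfl⟩ hne
  obtain ⟨t, rfl⟩ := List.getLast?_eq_some_iff.1 hp
  obtain ⟨t', rfl⟩ := List.getLast?_eq_some_iff.1 hp'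
  have hswap := (GraphProduct.swapEquiv_of_evalWord_eq (ReducedWord.locallyReduced hw)
    (ReducedWord.locallyReduced hw') heq.symm).reverse
  rw [List.reverse_append, List.reverse_append] at hswap
  obtain ⟨r, hr, -⟩ := (GraphProduct.HeadSplit.head t.reverse).of_swapEquiv hswap
  exact (hr.adj_of_cons (Ne.symm hne)).1
end
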